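/- arXiv:math/0701051 — 3 statements merged into one kernel-verified Lean document; each statement's English description precedes it below -/
import Mathlib

section
/- For any Young diagram λ and any permutation π ∈ S_l, Σ_{σ₁,σ₂ ∈ S_l, σ₁σ₂ = π} (−1)^{|σ₁|} Ñ^λ(σ₁,σ₂) = Σ_{σ₁,σ₂ ∈ S_l, σ₁σ₂ = π} (−1)^{|σ₁|} N̂^λ(σ₁,σ₂); that is, in the signed sum over all factorizations of π the count of injective functions may be replaced by the count of all functions. -/
open scoped Classical
open MeasureTheory ProbabilityTheory

noncomputable section

namespace Paper

/-- `|σ|`: the minimal number of factors needed to write `σ` as a product of transpositions. -/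
def permLength {α : Type*} [DecidableEq α] [Fintype α] (σ : Equiv.Perm α) : ℕ :=
  sInf {k | ∃ L : List (Equiv.Perm α), L.length = k ∧ (∀ τ ∈ L, τ.IsSwap) ∧ L.prod = σ}

/-- `r(λ)`: the number of rows of a Young diagram. -/
def rows (μ : YoungDiagram) : ℕ := μ.colLen 0

/-- `c(λ)`: the number of columns of a Young diagram. -/
def cols (μ : YoungDiagram) : ℕ := μ.rowLen 0

/-- The set of minimal representatives of the cycles (orbits, fixed points included) of `σ`. -/
def cycleReps {l : ℕ} (σ : Equiv.Perm (Fin l)) : Finset (Fin l) :=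
  Finset.univ.filter fun m => ∀ x, σ.SameCycle m x → m ≤ x

/-- `|C(σ)|`: the number of cycles (orbits, fixed points included) of `σ`. -/
def cyclesCount {l : ℕ} (σ : Equiv.Perm (Fin l)) : ℕ := (cycleReps σ).card

/-- The multiset of the lengths of all the cycles of `σ` (fixed points included). -/
def fullCycleType {l : ℕ} (σ : Equiv.Perm (Fin l)) : Multiset ℕ :=
  (cycleReps σ).val.map fun m => (Finset.univ.filter fun a => σ.SameCycle m a).card

/-- `N^λ(σ₁,σ₂)`: the number of colorings of the cycles of `σ₁` (by columns of `λ`, numbered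
from 1) and of the cycles of `σ₂` (by rows of `λ`, numbered from 1), compatible with `λ`;
a coloring is encoded as a pair of functions on points, constant on the respective cycles.
Recall that in Mathlib a cell of a Young diagram is a pair (row index, column index),
both 0-based, so the paper's requirement `(h(c₁), h(c₂)) ∈ λ` (column first, 1-based) reads
`(h₂ m - 1, h₁ m - 1) ∈ μ`. -/
def Ncol {l : ℕ} (μ : YoungDiagram) (σ₁ σ₂ : Equiv.Perm (Fin l)) : ℕ :=
  Nat.card {h : (Fin l → ℕ) × (Fin l → ℕ) //
    (∀ m, h.1 (σ₁ m) = h.1 m) ∧ (∀ m, h.2 (σ₂ m) = h.2 m) ∧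
    ∀ m, 1 ≤ h.1 m ∧ 1 ≤ h.2 m ∧ ((h.2 m - 1, h.1 m - 1) : ℕ × ℕ) ∈ μ}

/-- `P_λ`: the permutations preserving each row of `λ` (with respect to the labelling `f`). -/
def youngP {n : ℕ} (μ : YoungDiagram) (f : Fin n ≃ μ.cells) : Finset (Equiv.Perm (Fin n)) :=
  Finset.univ.filter fun σ => ∀ i, ((f (σ i)) : ℕ × ℕ).1 = ((f i) : ℕ × ℕ).1

/-- `Q_λ`: the permutations preserving each column of `λ` (with respect to the labelling `f`). -/
def youngQ {n : ℕ} (μ : YoungDiagram) (f : Fin n ≃ μ.cells) : Finset (Equiv.Perm (Fin n)) :=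
  Finset.univ.filter fun σ => ∀ i, ((f (σ i)) : ℕ × ℕ).2 = ((f i) : ℕ × ℕ).2

/-- `a_λ = Σ_{σ ∈ P_λ} σ` in the group algebra. -/
def aElt {n : ℕ} (μ : YoungDiagram) (f : Fin n ≃ μ.cells) :
    MonoidAlgebra ℂ (Equiv.Perm (Fin n)) :=
  ∑ σ ∈ youngP μ f, MonoidAlgebra.single σ 1

/-- `b_λ = Σ_{σ ∈ Q_λ} sgn(σ) σ` in the group algebra. -/
def bElt {n : ℕ} (μ : YoungDiagram) (f : Fin n ≃ μ.cells) :
    MonoidAlgebra ℂ (Equiv.Perm (Fin n)) :=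
  ∑ σ ∈ youngQ μ f, MonoidAlgebra.single σ ((Equiv.Perm.sign σ : ℤ) : ℂ)

/-- `V_λ = ℂ[S_n] b_λ a_λ`, the left ideal generated by the Young symmetrizer. -/
def youngModule {n : ℕ} (μ : YoungDiagram) (f : Fin n ≃ μ.cells) :
    Submodule ℂ (MonoidAlgebra ℂ (Equiv.Perm (Fin n))) :=
  LinearMap.range (LinearMap.mulRight ℂ (bElt μ f * aElt μ f))

/-- `ρ^λ(π)`: left multiplication by `π` on `V_λ`. -/
def rho {n : ℕ} (μ : YoungDiagram) (f : Fin n ≃ μ.cells) (π : Equiv.Perm (Fin n)) :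
    youngModule μ f →ₗ[ℂ] youngModule μ f :=
  (LinearMap.mulLeft ℂ (MonoidAlgebra.single π (1 : ℂ))).restrict (fun x hx => by
    obtain ⟨y, rfl⟩ := LinearMap.mem_range.mp hx
    exact LinearMap.mem_range.mpr ⟨MonoidAlgebra.single π (1 : ℂ) * y, by
      simp [LinearMap.mulRight_apply, LinearMap.mulLeft_apply, mul_assoc]⟩)

/-- The normalized character `χ^λ(π) = Tr ρ^λ(π) / Tr ρ^λ(e)`. -/
def chi {n : ℕ} (μ : YoungDiagram) (f : Fin n ≃ μ.cells) (π : Equiv.Perm (Fin n)) : ℂ :=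
  LinearMap.trace ℂ (youngModule μ f) (rho μ f π) /
    LinearMap.trace ℂ (youngModule μ f) (rho μ f 1)

/-- The embedding of `S_l` into `S_n` (permutations fixing `l+1,…,n`). -/
def embed {l n : ℕ} (hl : l ≤ n) (π : Equiv.Perm (Fin l)) : Equiv.Perm (Fin n) :=
  π.viaFintypeEmbedding (Fin.castLEEmb hl)

/-- The normalized character `Σ^λ(π) = (n)_l χ^λ(π)` for `π ∈ S_l`, `l ≤ n`. -/
def normChar {n l : ℕ} (μ : YoungDiagram) (f : Fin n ≃ μ.cells) (hl : l ≤ n)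
    (π : Equiv.Perm (Fin l)) : ℂ :=
  (n.descFactorial l : ℂ) * chi μ f (embed hl π)

/-- `ψ(c) = max_{a ∈ c} φ(a)`: the maximum of `φ` over the cycle of `τ` containing `m`. -/
def cycleMax {l r : ℕ} (τ : Equiv.Perm (Fin l)) (φ : Fin l → Fin r) (m : Fin l) : Fin r :=
  ((Finset.univ.filter fun a => τ.SameCycle m a).image φ).max'
    ⟨φ m, Finset.mem_image_of_mem φ
      (Finset.mem_filter.mpr ⟨Finset.mem_univ m, Equiv.Perm.SameCycle.refl τ m⟩)⟩

/-- The number of orbits of the subgroup `⟨σ₁, σ₂⟩` acting on `{1,…,l}`. -/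
def jointOrbits {l : ℕ} (σ₁ σ₂ : Equiv.Perm (Fin l)) : ℕ :=
  Nat.card (MulAction.orbitRel.Quotient (Subgroup.closure {σ₁, σ₂}) (Fin l))

/-- `o(σ₁,σ₂) = l − |C(σ₁)| − |C(σ₂)| + orbits(σ₁,σ₂)` (as an integer). -/
def oStat {l : ℕ} (σ₁ σ₂ : Equiv.Perm (Fin l)) : ℤ :=
  (l : ℤ) - cyclesCount σ₁ - cyclesCount σ₂ + jointOrbits σ₁ σ₂

/-- The free cumulant `R_{k+1}^λ` of (the transition measure of) `λ`, given by the
combinatorial formula: the sum of `(−1)^{|σ₁|} N^λ(σ₁,σ₂)` over the minimal factorizations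
`σ₁σ₂ = (1,2,…,k)` in `S_k`, i.e. those with `|σ₁| + |σ₂| = k − 1`. -/
def freeCumulant (μ : YoungDiagram) (k : ℕ) : ℂ :=
  ∑ p ∈ Finset.univ.filter (fun p : Equiv.Perm (Fin k) × Equiv.Perm (Fin k) =>
      p.1 * p.2 = finRotate k ∧ permLength p.1 + permLength p.2 = k - 1),
    (-1 : ℂ) ^ permLength p.1 * (Ncol μ p.1 p.2 : ℂ)

/-- `Ñ^λ(σ₁,σ₂)`: the number of injective functions from `{1,…,l}` to the boxes of `λ`
such that the row coordinate is constant on each cycle of `σ₂` and the column coordinate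
is constant on each cycle of `σ₁`.  (In Mathlib a cell is (row, column).) -/
def Ntilde {l : ℕ} (μ : YoungDiagram) (σ₁ σ₂ : Equiv.Perm (Fin l)) : ℕ :=
  Nat.card {f : Fin l → μ.cells // Function.Injective f ∧
    (∀ m, ((f (σ₂ m)) : ℕ × ℕ).1 = ((f m) : ℕ × ℕ).1) ∧
    (∀ m, ((f (σ₁ m)) : ℕ × ℕ).2 = ((f m) : ℕ × ℕ).2)}

/-- `N̂^λ(σ₁,σ₂)`: the number of all functions from `{1,…,l}` to the boxes of `λ`
such that the row coordinate is constant on each cycle of `σ₂` and the column coordinate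
is constant on each cycle of `σ₁`. -/
def Nhat {l : ℕ} (μ : YoungDiagram) (σ₁ σ₂ : Equiv.Perm (Fin l)) : ℕ :=
  Nat.card {f : Fin l → μ.cells //
    (∀ m, ((f (σ₂ m)) : ℕ × ℕ).1 = ((f m) : ℕ × ℕ).1) ∧
    (∀ m, ((f (σ₁ m)) : ℕ × ℕ).2 = ((f m) : ℕ × ℕ).2)}

/-- The number of column inversions of a permutation `σ` of the boxes of `λ`: the number of
pairs of boxes `□₁, □₂` such that `σ(□₁), σ(□₂)` are in the same column, `r(□₁) < r(□₂)` and
`r(σ(□₁)) > r(σ(□₂))`. -/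
def invCount (μ : YoungDiagram) (σ : Equiv.Perm μ.cells) : ℕ :=
  (Finset.univ.filter fun bb : (↥μ.cells × ↥μ.cells) =>
    ((σ bb.1 : ℕ × ℕ).2 = (σ bb.2 : ℕ × ℕ).2 ∧ (bb.1 : ℕ × ℕ).1 < (bb.2 : ℕ × ℕ).1 ∧
      (σ bb.2 : ℕ × ℕ).1 < (σ bb.1 : ℕ × ℕ).1)).card

/-- `(−1)^{inv(σ)}`, set to `0` when two boxes of the same row are mapped by `σ` to boxes
of the same column. -/
def invSign (μ : YoungDiagram) (σ : Equiv.Perm μ.cells) : ℂ :=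
  if ∃ b₁ b₂ : μ.cells, b₁ ≠ b₂ ∧ (b₁ : ℕ × ℕ).1 = (b₂ : ℕ × ℕ).1 ∧
      (σ b₁ : ℕ × ℕ).2 = (σ b₂ : ℕ × ℕ).2
  then 0 else (-1 : ℂ) ^ invCount μ σ

/-- The standard complex centered Gaussian distribution, realized as the distribution of
`(x + i y)/√2` with `x, y` independent standard real Gaussians. -/
def stdComplexGaussian : Measure ℂ :=
  ((gaussianReal 0 1).prod (gaussianReal 0 1)).map
    fun p => ((p.1 : ℂ) + (p.2 : ℂ) * Complex.I) / (Real.sqrt 2 : ℂ)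

/-- The random matrix `T_λ` built from the family of entries `t`. -/
def matOf {N : ℕ} {Ω : Type*} (t : Fin N → Fin N → Ω → ℂ) (ω : Ω) :
    Matrix (Fin N) (Fin N) ℂ :=
  Matrix.of fun i j => t i j ω

/-- The hypotheses on the entries of the random matrix `T_λ`: independent entries, standard
complex Gaussian on the boxes of `λ` and zero outside.  The matrix entry `t i j` (0-based)
corresponds to the box in column `i+1` and row `j+1` of `λ` (the paper's `(i,j) ∈ λ` with the
French convention), i.e. to the Mathlib cell `(j, i)`. -/
structure IsGaussianOn {N : ℕ} {Ω : Type*} [MeasureSpace Ω]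
    (t : Fin N → Fin N → Ω → ℂ) (μ : YoungDiagram) : Prop where
  prob : IsProbabilityMeasure (volume : Measure Ω)
  meas : ∀ i j, Measurable (t i j)
  indep : iIndepFun (fun ij : Fin N × Fin N => t ij.1 ij.2) volume
  gauss : ∀ i j : Fin N, (((j : ℕ), (i : ℕ)) : ℕ × ℕ) ∈ μ →
    Measure.map (t i j) volume = stdComplexGaussian
  zero : ∀ i j : Fin N, (((j : ℕ), (i : ℕ)) : ℕ × ℕ) ∉ μ → t i j = 0

/-! ### Bipartite graphs -/

/-- The simple graph on `C₁ ⊕ C₂` associated to a bipartite edge set `E ⊆ C₁ × C₂`. -/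
def bipGraph {C₁ C₂ : Type*} (E : Finset (C₁ × C₂)) : SimpleGraph (C₁ ⊕ C₂) where
  Adj x y := (∃ a b, (a, b) ∈ E ∧ x = Sum.inl a ∧ y = Sum.inr b) ∨
             (∃ a b, (a, b) ∈ E ∧ x = Sum.inr b ∧ y = Sum.inl a)
  symm := by
    constructor
    rintro x y (⟨a, b, h, rfl, rfl⟩ | ⟨a, b, h, rfl, rfl⟩)
    · exact Or.inr ⟨a, b, h, rfl, rfl⟩
    · exact Or.inl ⟨a, b, h, rfl, rfl⟩
  loopless := by
    constructor
    rintro x (⟨a, b, h, rfl, h2⟩ | ⟨a, b, h, rfl, h2⟩)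
    · cases h2
    · cases h2

/-- The degree of a left vertex in the bipartite edge set `E`. -/
def degL {C₁ C₂ : Type*} (E : Finset (C₁ × C₂)) (a : C₁) : ℕ :=
  (E.filter fun e => e.1 = a).card

/-- The degree of a right vertex in the bipartite edge set `E`. -/
def degR {C₁ C₂ : Type*} (E : Finset (C₁ × C₂)) (b : C₂) : ℕ :=
  (E.filter fun e => e.2 = b).card

/-- `E'` is a disjoint union of complete bipartite graphs of the form `G_{1,1}`, `G_{k,1}`,
`G_{1,k}` covering all the vertices: every vertex has nonzero degree and every edge has an
endpoint of degree one (i.e. every connected component is a star). -/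
def IsStarDecomposition {C₁ C₂ : Type*} (E' : Finset (C₁ × C₂)) : Prop :=
  (∀ a, 0 < degL E' a) ∧ (∀ b, 0 < degR E' b) ∧
    ∀ e ∈ E', degL E' e.1 = 1 ∨ degR E' e.2 = 1

/-- `N^λ(G)`: the number of colorings of the vertices of the bipartite graph with edge set `E`
(left vertices colored by columns of `λ`, right vertices by rows of `λ`, numbered from 1)
compatible with `λ`. -/
def NcolG {C₁ C₂ : Type*} (μ : YoungDiagram) (E : Finset (C₁ × C₂)) : ℕ :=
  Nat.card {h : (C₁ → ℕ) × (C₂ → ℕ) //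
    ∀ e ∈ E, 1 ≤ h.1 e.1 ∧ 1 ≤ h.2 e.2 ∧ ((h.2 e.2 - 1, h.1 e.1 - 1) : ℕ × ℕ) ∈ μ}

end Paper

/-
The sign `(-1)^{|σ₁|}` is `sgn σ₁`. Swapping the order of summation, the difference of the two
sides is a sum over the non-injective functions `f`; for such an `f`, pick `i ≠ j` with
`f i = f j` and put `τ = (i j)`. Then `(σ₁, σ₂) ↦ (σ₁ τ, τ σ₂)` is an involution of the
factorizations of `π` that preserves compatibility with `f` (as `f ∘ τ = f`) and flips `sgn σ₁`,
so the factorizations compatible with `f` contribute `0`.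
-/

open Equiv Finset

theorem Finset.sum_mul_card_filter {ι κ R : Type*} [CommSemiring R] (S : Finset ι)
    (T : Finset κ) (w : ι → R) (P : ι → κ → Prop) [∀ i j, Decidable (P i j)] :
    ∑ i ∈ S, w i * (#{j ∈ T | P i j} : R) = ∑ j ∈ T, ∑ i ∈ S with P i j, w i := by
  simp only [card_filter, Nat.cast_sum, Nat.cast_ite, Nat.cast_one, Nat.cast_zero, mul_sum,
    mul_ite, mul_one, mul_zero, sum_filter]
  exact sum_comm

theorem Equiv.Perm.sum_sign_eq_zero_of_swap_invariant {α : Type*} [DecidableEq α] [Fintype α]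
    (S : Finset (Perm α × Perm α)) {x y : α} (hxy : x ≠ y)
    (hS : ∀ s ∈ S, (s.1 * swap x y, swap x y * s.2) ∈ S) :
    ∑ s ∈ S, (Perm.sign s.1 : ℤ) = 0 := by
  refine sum_involution (fun s _ => (s.1 * swap x y, swap x y * s.2)) ?_ ?_ hS ?_
  · intro s _
    simp [Perm.sign_swap hxy]
  · intro s _ _ h
    have : swap x y = 1 := mul_left_cancel ((congrArg Prod.fst h).trans (mul_one s.1).symm)
    exact hxy (by simpa using (congrArg (· x) this).symm)
  · intro s _
    simp [mul_assoc]

namespace Paper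

theorem sign_eq_neg_one_pow_permLength {α : Type*} [DecidableEq α] [Fintype α]
    (σ : Perm α) : (Perm.sign σ : ℤ) = (-1) ^ permLength σ := by
  have hne : {k | ∃ L : List (Perm α), L.length = k ∧ (∀ τ ∈ L, τ.IsSwap) ∧
      L.prod = σ}.Nonempty := by
    obtain ⟨L, hprod, hswap⟩ := (Perm.truncSwapFactors σ).out
    exact ⟨L.length, L, rfl, hswap, hprod⟩
  obtain ⟨L, hlen, hswap, hprod⟩ := Nat.sInf_mem hne
  rw [permLength, ← hlen, ← hprod, Perm.sign_prod_list_swap hswap]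
  simp

section Compatible

variable {α : Type*} (μ : YoungDiagram)

def IsCompatible (σ₁ σ₂ : Perm α) (f : α → μ.cells) : Prop :=
  (∀ m, ((f (σ₂ m)) : ℕ × ℕ).1 = ((f m) : ℕ × ℕ).1) ∧
    (∀ m, ((f (σ₁ m)) : ℕ × ℕ).2 = ((f m) : ℕ × ℕ).2)

variable {μ} [DecidableEq α]

theorem IsCompatible.mul_swap {σ₁ σ₂ : Perm α} {f : α → μ.cells} {x y : α} (hf : f x = f y)
    (h : IsCompatible μ σ₁ σ₂ f) : IsCompatible μ (σ₁ * swap x y) (swap x y * σ₂) f := by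
  have hfswap : ∀ m, f (swap x y m) = f m := fun m => by
    rcases eq_or_ne m x with rfl | hmx
    · simp [hf]
    rcases eq_or_ne m y with rfl | hmy
    · simp [hf]
    · rw [swap_apply_of_ne_of_ne hmx hmy]
  exact ⟨fun m => by rw [Perm.mul_apply, hfswap, h.1],
    fun m => by rw [Perm.mul_apply, h.2, hfswap]⟩

theorem sum_sign_compatible_eq_zero_of_not_injective [Fintype α] (π : Perm α)
    {f : α → μ.cells} (hf : ¬ Function.Injective f) :
    ∑ s ∈ (univ.filter fun s : Perm α × Perm α => s.1 * s.2 = π).filter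
      (fun s => IsCompatible μ s.1 s.2 f), (Perm.sign s.1 : ℤ) = 0 := by
  obtain ⟨x, y, hfxy, hxy⟩ := Function.not_injective_iff.mp hf
  refine Perm.sum_sign_eq_zero_of_swap_invariant _ hxy fun s hs => ?_
  simp only [mem_filter, mem_univ, true_and] at hs ⊢
  exact ⟨by rw [mul_assoc, swap_mul_self_mul, hs.1], hs.2.mul_swap hfxy⟩

end Compatible

theorem Ntilde_eq_card {l : ℕ} (μ : YoungDiagram) (σ₁ σ₂ : Perm (Fin l)) :
    Ntilde μ σ₁ σ₂ = #{f ∈ {f | Function.Injective f} | IsCompatible μ σ₁ σ₂ f} := by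
  rw [Ntilde, Nat.card_eq_fintype_card, Fintype.card_subtype, filter_filter]
  congr

theorem Nhat_eq_card {l : ℕ} (μ : YoungDiagram) (σ₁ σ₂ : Perm (Fin l)) :
    Nhat μ σ₁ σ₂ = #{f | IsCompatible μ σ₁ σ₂ f} := by
  rw [Nhat, Nat.card_eq_fintype_card, Fintype.card_subtype]
  congr

theorem sum_Ntilde_eq_sum_Nhat (l : ℕ) (μ : YoungDiagram) (π : Equiv.Perm (Fin l)) :
    ∑ s ∈ Finset.univ.filter
        (fun s : Equiv.Perm (Fin l) × Equiv.Perm (Fin l) => s.1 * s.2 = π),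
      (-1 : ℂ) ^ permLength s.1 * (Ntilde μ s.1 s.2 : ℂ) =
    ∑ s ∈ Finset.univ.filter
        (fun s : Equiv.Perm (Fin l) × Equiv.Perm (Fin l) => s.1 * s.2 = π),
      (-1 : ℂ) ^ permLength s.1 * (Nhat μ s.1 s.2 : ℂ) := by
  set S := Finset.univ.filter
    (fun s : Equiv.Perm (Fin l) × Equiv.Perm (Fin l) => s.1 * s.2 = π)
  suffices h : ∑ s ∈ S, (Perm.sign s.1 : ℤ) * Ntilde μ s.1 s.2 =
      ∑ s ∈ S, (Perm.sign s.1 : ℤ) * Nhat μ s.1 s.2 by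
    simpa [sign_eq_neg_one_pow_permLength] using congrArg (Int.cast : ℤ → ℂ) h
  simp only [Ntilde_eq_card, Nhat_eq_card, sum_mul_card_filter]
  rw [← sum_filter_add_sum_filter_not univ Function.Injective,
    sum_eq_zero (s := {f | ¬ Function.Injective f}), add_zero]
  intro f hf
  exact sum_sign_compatible_eq_zero_of_not_injective π (mem_filter.mp hf).2

end Paper
end
end

section
/- Let G be a finite bipartite graph with vertex classes C₁, C₂ in which every vertex has nonzero degree. Then one can remove some edges of G so that the resulting spanning subgraph G̃ is a disjoint union of graphs of the form G_{1,1}, G_{k,1}, G_{1,k}; moreover, for every such spanning subgraph G̃ and every Young diagram λ with n boxes and every A ≥ r(λ), c(λ), one has N^λ(G) ≤ A^{(number of vertices of G)} · (n/A²)^{(number of connected components of G̃)}. -/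
/-! Deleting, one at a time, edges whose two endpoints both have degree at least two yields a
spanning subgraph `G̃` made of stars.

For the estimate, choose one edge in each of the `c` components of `G̃`: since `G̃` has no isolated
vertex, this is a matching of `c` edges of `G`. As every vertex of `G` lies on an edge, a coloring
is determined by the cells of `λ` at the matched edges (at most `n` choices each) and by the colors
of the other `V - 2c` vertices (at most `max r(λ) c(λ) ≤ A` choices each). Hence
`N^λ(G) ≤ n^c A^(V-2c) = A^V (n/A²)^c`, where `n ≤ r(λ) c(λ) ≤ A²` covers the case `A = 0`. -/

open scoped Classical
open MeasureTheory ProbabilityTheory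

noncomputable section

namespace Paper

section BipartiteGraph

variable {C₁ C₂ : Type*} {E : Finset (C₁ × C₂)}

lemma exists_mem_fst_eq_of_degL_pos {a : C₁} (h : 0 < degL E a) : ∃ e ∈ E, e.1 = a := by
  obtain ⟨e, he⟩ := Finset.card_pos.mp h
  exact ⟨e, Finset.mem_filter.mp he⟩

lemma exists_mem_snd_eq_of_degR_pos {b : C₂} (h : 0 < degR E b) : ∃ e ∈ E, e.2 = b := by
  obtain ⟨e, he⟩ := Finset.card_pos.mp h
  exact ⟨e, Finset.mem_filter.mp he⟩

lemma card_filter_erase_pos {α : Type*} [DecidableEq α] {s : Finset α} {p : α → Prop}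
    [DecidablePred p] {e : α} (hpos : 0 < (s.filter p).card)
    (hne : p e → (s.filter p).card ≠ 1) : 0 < ((s.erase e).filter p).card := by
  rw [Finset.filter_erase]
  by_cases hp : p e
  · have := Finset.pred_card_le_card_erase (s := s.filter p) (a := e)
    have := hne hp
    omega
  · rwa [Finset.erase_eq_of_notMem fun he => hp (Finset.mem_filter.mp he).2]

theorem exists_isStarDecomposition_subset (E : Finset (C₁ × C₂))
    (h₁ : ∀ a, 0 < degL E a) (h₂ : ∀ b, 0 < degR E b) : ∃ E' ⊆ E, IsStarDecomposition E' := by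
  induction E using Finset.strongInduction with
  | H E ih =>
    by_cases hstar : ∀ e ∈ E, degL E e.1 = 1 ∨ degR E e.2 = 1
    · exact ⟨E, subset_rfl, h₁, h₂, hstar⟩
    push Not at hstar
    obtain ⟨e, he, hL, hR⟩ := hstar
    obtain ⟨E', hE', hstar'⟩ := ih (E.erase e) (Finset.erase_ssubset he)
      (fun a => card_filter_erase_pos (h₁ a) (by rintro rfl; exact hL))
      (fun b => card_filter_erase_pos (h₂ b) (by rintro rfl; exact hR))
    exact ⟨E', hE'.trans (Finset.erase_subset _ _), hstar'⟩

lemma bipGraph_adj_of_mem {e : C₁ × C₂} (he : e ∈ E) :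
    (bipGraph E).Adj (Sum.inl e.1) (Sum.inr e.2) :=
  Or.inl ⟨e.1, e.2, he, rfl, rfl⟩

theorem exists_matching_connectedComponent (h₁ : ∀ a, 0 < degL E a) (h₂ : ∀ b, 0 < degR E b) :
    ∃ p : (bipGraph E).ConnectedComponent → C₁ × C₂, (∀ K, p K ∈ E) ∧
      Function.Injective (Prod.fst ∘ p) ∧ Function.Injective (Prod.snd ∘ p) := by
  set G := bipGraph E
  have hedge : ∀ K : G.ConnectedComponent, ∃ e ∈ E, G.connectedComponentMk (Sum.inl e.1) = K := by
    refine SimpleGraph.ConnectedComponent.ind fun v => ?_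
    rcases v with a | b
    · obtain ⟨e, he, rfl⟩ := exists_mem_fst_eq_of_degL_pos (h₁ a)
      exact ⟨e, he, rfl⟩
    · obtain ⟨e, he, rfl⟩ := exists_mem_snd_eq_of_degR_pos (h₂ b)
      exact ⟨e, he, SimpleGraph.ConnectedComponent.sound (bipGraph_adj_of_mem he).reachable⟩
  choose p hpE hpK using hedge
  have hpK' : ∀ K, G.connectedComponentMk (Sum.inr (p K).2) = K := fun K =>
    (SimpleGraph.ConnectedComponent.sound (bipGraph_adj_of_mem (hpE K)).reachable).symm.trans
      (hpK K)
  exact ⟨p, hpE, Function.LeftInverse.injective (g := fun a => G.connectedComponentMk (Sum.inl a))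
    hpK, Function.LeftInverse.injective (g := fun b => G.connectedComponentMk (Sum.inr b)) hpK'⟩

end BipartiteGraph

lemma lt_rows_and_lt_cols_of_mem {μ : YoungDiagram} {i j : ℕ} (h : (i, j) ∈ μ) :
    i < rows μ ∧ j < cols μ :=
  ⟨(YoungDiagram.mem_iff_lt_colLen.mp h).trans_le (μ.colLen_anti 0 j (Nat.zero_le j)),
    (YoungDiagram.mem_iff_lt_rowLen.mp h).trans_le (μ.rowLen_anti 0 i (Nat.zero_le i))⟩

lemma card_le_rows_mul_cols (μ : YoungDiagram) : μ.card ≤ rows μ * cols μ := by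
  have hsub : μ.cells ⊆ Finset.range (rows μ) ×ˢ Finset.range (cols μ) := fun c hc => by
    simpa using lt_rows_and_lt_cols_of_mem ((YoungDiagram.mem_cells _).mp hc)
  simpa using Finset.card_le_card hsub

theorem NcolG_le_of_matching {C₁ C₂ ι : Type*} [Fintype C₁] [Fintype C₂] {E : Finset (C₁ × C₂)}
    (h₁ : ∀ a, 0 < degL E a) (h₂ : ∀ b, 0 < degR E b) (μ : YoungDiagram) (p : ι → C₁ × C₂)
    (hpE : ∀ i, p i ∈ E) (hp₁ : Function.Injective (Prod.fst ∘ p))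
    (hp₂ : Function.Injective (Prod.snd ∘ p)) :
    NcolG μ E ≤ μ.card ^ Nat.card ι *
      max (rows μ) (cols μ) ^ (Fintype.card C₁ + Fintype.card C₂ - 2 * Nat.card ι) := by
  have : Finite ι := Finite.of_injective _ hp₁
  set M := max (rows μ) (cols μ)
  set S := {h : (C₁ → ℕ) × (C₂ → ℕ) //
    ∀ e ∈ E, 1 ≤ h.1 e.1 ∧ 1 ≤ h.2 e.2 ∧ ((h.2 e.2 - 1, h.1 e.1 - 1) : ℕ × ℕ) ∈ μ}
  let color (h : S) : C₁ ⊕ C₂ → ℕ := Sum.elim h.1.1 h.1.2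
  have hcolor : ∀ h v, 1 ≤ color h v ∧ color h v - 1 < M := by
    rintro h (a | b)
    · obtain ⟨e, he, rfl⟩ := exists_mem_fst_eq_of_degL_pos (h₁ a)
      obtain ⟨hpos, -, hmem⟩ := h.2 e he
      exact ⟨hpos, (lt_rows_and_lt_cols_of_mem hmem).2.trans_le (le_max_right _ _)⟩
    · obtain ⟨e, he, rfl⟩ := exists_mem_snd_eq_of_degR_pos (h₂ b)
      obtain ⟨-, hpos, hmem⟩ := h.2 e he
      exact ⟨hpos, (lt_rows_and_lt_cols_of_mem hmem).1.trans_le (le_max_left _ _)⟩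
  let j : ι ⊕ ι → C₁ ⊕ C₂ := Sum.map (Prod.fst ∘ p) (Prod.snd ∘ p)
  have hj : Function.Injective j := hp₁.sumMap hp₂
  let T := ↥(Set.range j)ᶜ
  let Φ (h : S) : (ι → μ.cells) × (T → Fin M) :=
    (fun i => ⟨(h.1.2 (p i).2 - 1, h.1.1 (p i).1 - 1),
        (YoungDiagram.mem_cells _).mpr (h.2 _ (hpE i)).2.2⟩,
      fun v => ⟨color h v - 1, (hcolor h v).2⟩)
  have hΦ : Function.Injective Φ := by
    intro h h' hhh'
    have hshift : ∀ v, color h v - 1 = color h' v - 1 := by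
      intro v
      by_cases hv : v ∈ Set.range j
      · obtain ⟨i | i, rfl⟩ := hv
        · exact congrArg (fun F : (ι → μ.cells) × (T → Fin M) => (F.1 i : ℕ × ℕ).2) hhh'
        · exact congrArg (fun F : (ι → μ.cells) × (T → Fin M) => (F.1 i : ℕ × ℕ).1) hhh'
      · exact congrArg (fun F : (ι → μ.cells) × (T → Fin M) => (F.2 ⟨v, hv⟩ : ℕ)) hhh'
    have hcolor_eq : ∀ v, color h v = color h' v := fun v => by
      have := hcolor h v; have := hcolor h' v; have := hshift v; omega
    exact Subtype.ext (Prod.ext (funext fun a => hcolor_eq (Sum.inl a))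
      (funext fun b => hcolor_eq (Sum.inr b)))
  have hT : Nat.card T = Fintype.card C₁ + Fintype.card C₂ - 2 * Nat.card ι := by
    rw [Nat.card_coe_set_eq, Set.ncard_compl, Set.ncard_range_of_injective hj, Nat.card_sum,
      Nat.card_sum, Nat.card_eq_fintype_card, Nat.card_eq_fintype_card, two_mul]
  calc NcolG μ E ≤ Nat.card ((ι → μ.cells) × (T → Fin M)) := Nat.card_le_card_of_injective Φ hΦ
    _ = _ := by
      rw [Nat.card_prod, Nat.card_fun, Nat.card_fun, hT, Nat.card_eq_finsetCard, Nat.card_fin]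

lemma pow_mul_pow_sub_two_mul_le {n M A : ℝ} {m V : ℕ} (hn : 0 ≤ n) (hnA : n ≤ A ^ 2)
    (hM : 0 ≤ M) (hMA : M ≤ A) (hmV : 2 * m ≤ V) :
    n ^ m * M ^ (V - 2 * m) ≤ A ^ V * (n / A ^ 2) ^ m := by
  rcases eq_or_ne A 0 with rfl | hA
  · obtain rfl : n = 0 := le_antisymm (by simpa using hnA) hn
    obtain rfl : M = 0 := le_antisymm hMA hM
    rcases Nat.eq_zero_or_pos m with rfl | hm
    · simp
    · simp [zero_pow hm.ne', zero_pow (show V ≠ 0 by omega)]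
  · have hsplit : A ^ V = A ^ (V - 2 * m) * (A ^ 2) ^ m := by
      rw [← pow_mul, ← pow_add, Nat.sub_add_cancel hmV]
    rw [hsplit, div_pow, mul_assoc, ← mul_div_assoc, mul_div_cancel_left₀ _ (by positivity),
      mul_comm]
    gcongr

theorem bipartite_graph_estimate {C₁ C₂ : Type} [Fintype C₁] [Fintype C₂]
    (E : Finset (C₁ × C₂)) (hdeg₁ : ∀ a, 0 < degL E a) (hdeg₂ : ∀ b, 0 < degR E b) :
    (∃ E' ⊆ E, IsStarDecomposition E') ∧
      ∀ E' ⊆ E, IsStarDecomposition E' →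
        ∀ (μ : YoungDiagram) (n : ℕ), μ.card = n → ∀ A : ℝ,
          (rows μ : ℝ) ≤ A → (cols μ : ℝ) ≤ A →
          (NcolG μ E : ℝ) ≤ A ^ (Fintype.card C₁ + Fintype.card C₂) *
            ((n : ℝ) / A ^ 2) ^ Nat.card (bipGraph E').ConnectedComponent := by
  refine ⟨exists_isStarDecomposition_subset E hdeg₁ hdeg₂, ?_⟩
  rintro E' hE' ⟨hdeg₁', hdeg₂', -⟩ μ n rfl A hrows hcols
  obtain ⟨p, hpE', hp₁, hp₂⟩ := exists_matching_connectedComponent hdeg₁' hdeg₂'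
  have hcount := NcolG_le_of_matching hdeg₁ hdeg₂ μ p (fun K => hE' (hpE' K)) hp₁ hp₂
  have hmatch : 2 * Nat.card (bipGraph E').ConnectedComponent ≤
      Fintype.card C₁ + Fintype.card C₂ := by
    have := (Nat.card_le_card_of_injective _ hp₁).trans_eq Nat.card_eq_fintype_card
    have := (Nat.card_le_card_of_injective _ hp₂).trans_eq Nat.card_eq_fintype_card
    omega
  have hnA : (μ.card : ℝ) ≤ A ^ 2 := by
    calc (μ.card : ℝ) ≤ rows μ * cols μ := by exact_mod_cast card_le_rows_mul_cols μ
      _ ≤ A * A := mul_le_mul hrows hcols (Nat.cast_nonneg _) ((Nat.cast_nonneg _).trans hrows)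
      _ = A ^ 2 := (sq A).symm
  calc (NcolG μ E : ℝ) ≤ (μ.card : ℝ) ^ _ * (max (rows μ) (cols μ) : ℕ) ^ _ := by
        exact_mod_cast hcount
    _ ≤ _ := pow_mul_pow_sub_two_mul_le (by positivity) hnA (by positivity)
        (by push_cast; exact max_le hrows hcols) hmatch

end Paper
end
end

section
/- For any integers l ≥ 1 and i ≥ 0, the number of permutations σ ∈ S_l with |σ| = i is at most l^{2i} / i!. -/
open scoped Classical
open MeasureTheory ProbabilityTheory

noncomputable section

namespace Paper

/-! Every product of transpositions can be rewritten, without increasing the number of factors,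
as `(x₁ y₁)(x₂ y₂)⋯(xₖ yₖ)` with `xⱼ < yⱼ` and `y₁ > y₂ > ⋯ > yₖ`: a transposition multiplied
on the left is pushed into such a word using `(x m)(z m) = (z m)(z x)` and
`(x y)(z m) = ((x y) z, m)(x y)` for `x, y ≠ m`, or cancels. Hence `σ` with `|σ| = i` is
determined by the set `{y₁, …, yᵢ}` and the sequence `(x₁, …, xᵢ)`, which leaves at most
`C(l, i) · lⁱ ≤ l²ⁱ / i!` possibilities. -/

section SwapNormalForm

open Equiv

variable {α : Type*} [LinearOrder α]

def prodSwaps (M : List (α × α)) : Perm α := (M.map fun p => swap p.1 p.2).prod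

@[simp] lemma prodSwaps_cons (p : α × α) (M : List (α × α)) :
    prodSwaps (p :: M) = swap p.1 p.2 * prodSwaps M := rfl

def IsNormalSwapList (M : List (α × α)) : Prop :=
  (∀ p ∈ M, p.1 < p.2) ∧ (M.map Prod.snd).Pairwise (· > ·)

lemma isNormalSwapList_nil : IsNormalSwapList ([] : List (α × α)) := by
  simp [IsNormalSwapList]

lemma isNormalSwapList_cons {p : α × α} {M : List (α × α)} :
    IsNormalSwapList (p :: M) ↔ p.1 < p.2 ∧ (∀ q ∈ M, q.2 < p.2) ∧ IsNormalSwapList M := by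
  simp only [IsNormalSwapList, List.forall_mem_cons, List.map_cons, List.pairwise_cons,
    List.forall_mem_map]
  tauto

lemma swap_eq_swap_min_max (x y : α) : swap x y = swap (min x y) (max x y) := by
  rcases le_total x y with h | h
  · rw [min_eq_left h, max_eq_right h]
  · rw [min_eq_right h, max_eq_left h, swap_comm]

lemma swap_apply_lt {x y z b : α} (hx : x < b) (hy : y < b) (hz : z < b) : swap x y z < b := by
  rw [swap_apply_def]
  split_ifs <;> assumption

lemma swap_mul_swap_of_ne {x z m : α} (hxz : x ≠ z) (hxm : x ≠ m) :
    swap x m * swap z m = swap z m * swap z x := by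
  have h := swap_apply_apply (swap z m) z x
  rw [swap_apply_left, swap_apply_of_ne_of_ne hxz hxm, swap_comm m x] at h
  rw [h, swap_inv, mul_assoc, swap_mul_self, mul_one]

lemma swap_mul_swap_of_ne_of_ne {x y z m : α} (hxm : x ≠ m) (hym : y ≠ m) :
    swap x y * swap z m = swap (swap x y z) m * swap x y := by
  have h := swap_apply_apply (swap x y) z m
  rw [swap_apply_of_ne_of_ne hxm.symm hym.symm] at h
  rw [h, swap_inv, mul_assoc, mul_assoc, swap_mul_self, mul_one]

/-- The last conjunct (the new second coordinates stay below any common strict upper bound)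
is what lets the induction put the result behind a larger pair. -/
theorem IsNormalSwapList.exists_swap_mul {M : List (α × α)} (hM : IsNormalSwapList M)
    {x y : α} (hxy : x < y) :
    ∃ N, IsNormalSwapList N ∧ N.length ≤ M.length + 1 ∧
      prodSwaps N = swap x y * prodSwaps M ∧
      ∀ b, y < b → (∀ q ∈ M, q.2 < b) → ∀ p ∈ N, p.2 < b := by
  induction M generalizing x y with
  | nil =>
    refine ⟨[(x, y)], ?_, le_rfl, by simp, by simp⟩
    exact isNormalSwapList_cons.2 ⟨hxy, by simp, isNormalSwapList_nil⟩
  | cons q R ih =>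
    obtain ⟨z, m⟩ := q
    obtain ⟨hzm, hRm, hR⟩ := isNormalSwapList_cons.1 hM
    simp only [List.forall_mem_cons]
    rcases lt_trichotomy m y with hmy | rfl | hym
    · refine ⟨(x, y) :: (z, m) :: R, isNormalSwapList_cons.2 ⟨hxy, ?_, hM⟩, by simp, rfl, ?_⟩
      · exact List.forall_mem_cons.2 ⟨hmy, fun q hq => (hRm q hq).trans hmy⟩
      · exact fun b hb hMb => List.forall_mem_cons.2 ⟨hb, List.forall_mem_cons.2 hMb⟩
    · by_cases hxz : x = z
      · subst hxz
        exact ⟨R, hR, by simp; omega, by simp [← mul_assoc], fun b _ hMb => hMb.2⟩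
      · obtain ⟨N, hN, hNlen, hNprod, hNb⟩ :=
          ih hR (min_lt_max.2 (Ne.symm hxz) : min z x < max z x)
        have hNm := hNb m (max_lt hzm hxy) hRm
        refine ⟨(z, m) :: N, isNormalSwapList_cons.2 ⟨hzm, hNm, hN⟩, by simp; omega, ?_, ?_⟩
        · rw [prodSwaps_cons, prodSwaps_cons, hNprod, ← swap_eq_swap_min_max, ← mul_assoc,
            ← mul_assoc, swap_mul_swap_of_ne hxz hxy.ne]
        · exact fun b hb _ => List.forall_mem_cons.2 ⟨hb, fun p hp => (hNm p hp).trans hb⟩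
    · obtain ⟨N, hN, hNlen, hNprod, hNb⟩ := ih hR hxy
      have hNm := hNb m hym hRm
      have hzm' : swap x y z < m := swap_apply_lt (hxy.trans hym) hym hzm
      refine ⟨(swap x y z, m) :: N, isNormalSwapList_cons.2 ⟨hzm', hNm, hN⟩, by simpa, ?_, ?_⟩
      · rw [prodSwaps_cons, prodSwaps_cons, hNprod, ← mul_assoc, ← mul_assoc,
          swap_mul_swap_of_ne_of_ne (hxy.trans hym).ne hym.ne]
      · exact fun b _ hMb => List.forall_mem_cons.2 ⟨hMb.1, fun p hp => (hNm p hp).trans hMb.1⟩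

theorem exists_isNormalSwapList_of_isSwap (L : List (Perm α)) (hL : ∀ τ ∈ L, τ.IsSwap) :
    ∃ M, IsNormalSwapList M ∧ M.length ≤ L.length ∧ prodSwaps M = L.prod := by
  induction L with
  | nil => exact ⟨[], isNormalSwapList_nil, le_rfl, rfl⟩
  | cons τ T ih =>
    obtain ⟨hτ, hT⟩ := List.forall_mem_cons.1 hL
    obtain ⟨M, hM, hMlen, hMprod⟩ := ih hT
    obtain ⟨x, y, hxy, rfl⟩ := hτ
    obtain ⟨N, hN, hNlen, hNprod, -⟩ := hM.exists_swap_mul (min_lt_max.2 hxy)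
    refine ⟨N, hN, by simp; omega, ?_⟩
    rw [hNprod, hMprod, List.prod_cons, ← swap_eq_swap_min_max]

lemma IsNormalSwapList.eq_zip_sort {M : List (α × α)} (hM : IsNormalSwapList M) :
    M = (M.map Prod.fst).zip ((M.map Prod.snd).toFinset.sort (· ≥ ·)) := by
  rw [(List.toFinset_sort (· ≥ ·) (hM.2.imp ne_of_gt)).2 (hM.2.imp le_of_lt),
    ← List.unzip_fst, ← List.unzip_snd, List.zip_unzip]

variable [Fintype α]

lemma permLength_prodSwaps_le {M : List (α × α)} (hM : ∀ p ∈ M, p.1 ≠ p.2) :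
    permLength (prodSwaps M) ≤ M.length :=
  Nat.sInf_le ⟨M.map fun p => swap p.1 p.2, List.length_map _,
    List.forall_mem_map.2 fun p hp => ⟨p.1, p.2, hM p hp, rfl⟩, rfl⟩

theorem exists_isNormalSwapList_length_eq_permLength (σ : Perm α) :
    ∃ M, IsNormalSwapList M ∧ M.length = permLength σ ∧ prodSwaps M = σ := by
  obtain ⟨L, hLlen, hLswap, hLprod⟩ := Nat.sInf_mem (s := {k | ∃ L : List (Perm α),
      L.length = k ∧ (∀ τ ∈ L, τ.IsSwap) ∧ L.prod = σ})
    (σ.swap_induction_on ⟨0, [], rfl, by simp, rfl⟩ fun π x y hxy ⟨k, L, hk, hL, hLπ⟩ =>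
      ⟨k + 1, swap x y :: L, by simp [hk], List.forall_mem_cons.2 ⟨⟨x, y, hxy, rfl⟩, hL⟩,
        by rw [List.prod_cons, hLπ]⟩)
  obtain ⟨M, hM, hMlen, hMprod⟩ := exists_isNormalSwapList_of_isSwap L hLswap
  have hge : permLength σ ≤ M.length := by
    rw [← hLprod, ← hMprod]
    exact permLength_prodSwaps_le fun p hp => (hM.1 p hp).ne
  exact ⟨M, hM, le_antisymm (hMlen.trans_eq hLlen) hge, hMprod.trans hLprod⟩

open Finset in
theorem card_filter_permLength_eq_le (i : ℕ) :
    #{σ : Perm α | permLength σ = i} ≤ (Fintype.card α).choose i * Fintype.card α ^ i := by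
  let decode : Finset α × List.Vector α i → Perm α :=
    fun p => prodSwaps (p.2.toList.zip (p.1.sort (· ≥ ·)))
  calc #{σ : Perm α | permLength σ = i}
      ≤ #((powersetCard i univ ×ˢ univ).image decode) := card_le_card ?_
    _ ≤ #(powersetCard i univ ×ˢ univ) := card_image_le
    _ = _ := by simp [card_powersetCard]
  intro σ hσ
  obtain ⟨M, hM, hMlen, rfl⟩ := exists_isNormalSwapList_length_eq_permLength σ
  rw [mem_filter] at hσ
  refine mem_image.2 ⟨((M.map Prod.snd).toFinset, ⟨M.map Prod.fst, by simp [hMlen, hσ.2]⟩),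
    mem_product.2 ⟨mem_powersetCard_univ.2 ?_, mem_univ _⟩, ?_⟩
  · rw [List.toFinset_card_of_nodup (hM.2.imp ne_of_gt), List.length_map, hMlen, hσ.2]
  · simp only [decode, List.Vector.toList_mk]
    rw [← hM.eq_zip_sort]

end SwapNormalForm

theorem count_permutations_of_given_length_general (l i : ℕ) :
    ((Finset.univ.filter fun σ : Equiv.Perm (Fin l) => permLength σ = i).card : ℝ) ≤
      (l : ℝ) ^ (2 * i) / (Nat.factorial i : ℝ) := by
  have hcard := card_filter_permLength_eq_le (α := Fin l) i
  rw [Fintype.card_fin] at hcard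
  calc _ ≤ (l.choose i : ℝ) * (l : ℝ) ^ i := by exact_mod_cast hcard
    _ ≤ (l : ℝ) ^ i / i.factorial * (l : ℝ) ^ i := by
      gcongr
      exact Nat.choose_le_pow_div i l
    _ = (l : ℝ) ^ (2 * i) / i.factorial := by ring

theorem count_permutations_of_given_length (l i : ℕ) (hl : 1 ≤ l) :
    ((Finset.univ.filter fun σ : Equiv.Perm (Fin l) => permLength σ = i).card : ℝ) ≤
      (l : ℝ) ^ (2 * i) / (Nat.factorial i : ℝ) :=
  count_permutations_of_given_length_general l i

end Paper
end
end
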